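/- Let G be a weakly-reversible CRN. If the ideal (E_G) generated by the associated event-system is prime, then G is not catalytic. -/

import Mathlib

open MvPolynomial Relation

/-- A chemical reaction network on `s` species: a finite directed graph whose
vertices are labeled by distinct monomials (exponent vectors). -/
structure CRN (s : ℕ) where
  n : ℕ
  edge : Fin n → Fin n → Prop
  ψ : Fin n → (Fin s → ℕ)
  inj : Function.Injective ψ

variable {s : ℕ}

/-- Weak reversibility: every connected component of the reaction graph is
strongly connected, i.e. undirected reachability implies directed reachability. -/
def CRN.weaklyReversible (G : CRN s) : Prop :=
  ∀ i j, Relation.ReflTransGen (fun a b => G.edge a b ∨ G.edge b a) i j →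
    Relation.ReflTransGen G.edge i j

/-- Directed edge of the event-graph: `(N·ψ i, N·ψ j)` for an edge `(i,j)` of `G`
and a monic monomial `N` (exponent vector `c`). -/
def CRN.eventEdge (G : CRN s) (M N : Fin s → ℕ) : Prop :=
  ∃ i j c, G.edge i j ∧ M = c + G.ψ i ∧ N = c + G.ψ j

/-- Directed reachability in the event-graph. -/
def CRN.eventReach (G : CRN s) (M N : Fin s → ℕ) : Prop :=
  Relation.ReflTransGen G.eventEdge M N

/-- Path-connectedness (in the undirected sense) in the event-graph. -/
def CRN.connected (G : CRN s) (M N : Fin s → ℕ) : Prop :=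
  Relation.ReflTransGen (fun a b => G.eventEdge a b ∨ G.eventEdge b a) M N

/-- gcd of two monomials, as exponent vectors. -/
def mgcd (M N : Fin s → ℕ) : Fin s → ℕ := fun i => min (M i) (N i)

/-- A weakly-reversible CRN is catalytic iff some path-connected monomials `M, N`
in the event-graph become disconnected after dividing by their gcd. -/
def CRN.catalytic (G : CRN s) : Prop :=
  ∃ M N : Fin s → ℕ, G.connected M N ∧
    ¬ G.connected (M - mgcd M N) (N - mgcd M N)

/-- The monic monomial with exponent vector `e`, as a polynomial. -/
noncomputable def mon (k : Type*) [CommSemiring k] (e : Fin s → ℕ) :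
    MvPolynomial (Fin s) k :=
  MvPolynomial.monomial (Finsupp.equivFunOnFinite.symm e) 1

/-- The set of binomials of the associated event-system `E_G` (one binomial for
each edge of the underlying undirected graph of `G`). -/
def CRN.eventSystem (G : CRN s) (k : Type*) [CommRing k] :
    Set (MvPolynomial (Fin s) k) :=
  {p | ∃ i j, (G.edge i j ∨ G.edge j i) ∧ p = mon k (G.ψ i) - mon k (G.ψ j)}

/-- The ideal `(E_G)` generated by the associated event-system. -/
noncomputable def CRN.eventIdeal (G : CRN s) (k : Type*) [CommRing k] :
    Ideal (MvPolynomial (Fin s) k) :=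
  Ideal.span (G.eventSystem k)

/-- The stoichiometric subspace of `G`. -/
def CRN.stoich (G : CRN s) : Submodule ℝ (Fin s → ℝ) :=
  Submodule.span ℝ
    {v | ∃ i j, G.edge i j ∧ v = fun t => (G.ψ j t : ℝ) - (G.ψ i t : ℝ)}

/-- `Z` is a siphon of `G`. -/
def CRN.siphon (G : CRN s) (Z : Set (Fin s)) : Prop :=
  Z.Nonempty ∧ ∀ i j, G.edge i j →
    (∃ l ∈ Z, G.ψ j l ≠ 0) → (∃ l ∈ Z, G.ψ i l ≠ 0)

/-- `Z` is a critical siphon of `G`: a siphon whose zero pattern is realized by a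
nonnegative point whose invariant polyhedron meets the positive orthant. -/
def CRN.criticalSiphon (G : CRN s) (Z : Set (Fin s)) : Prop :=
  G.siphon Z ∧ ∃ z : Fin s → ℝ, (∀ i, 0 ≤ z i) ∧ Z = {i | z i = 0} ∧
    ∃ p : Fin s → ℝ, (∀ i, 0 < p i) ∧ p - z ∈ G.stoich

/-- The underlying undirected CRN (every reaction made reversible). -/
def CRN.sym (G : CRN s) : CRN s :=
  ⟨G.n, fun i j => G.edge i j ∨ G.edge j i, G.ψ, G.inj⟩

/-- A point `a` is a zero of all binomials in the event-system of `G`. -/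
def CRN.vanishesAt (G : CRN s) {k : Type*} [CommRing k] (a : Fin s → k) : Prop :=
  ∀ i j, G.edge i j → ∏ t, a t ^ G.ψ i t = ∏ t, a t ^ G.ψ j t

/-- The saturation `I : f^∞`, as a set. -/
def satSet {R : Type*} [CommRing R] (I : Ideal R) (f : R) : Set R :=
  {g | ∃ m : ℕ, 0 < m ∧ f ^ m * g ∈ I}

/-! A binomial `x^M - x^N` lies in `(E_G)` exactly when `M` and `N` are connected in the
event graph: walking along a path writes it as a combination of multiples of generators, and
conversely the map from `k[x]` to the monoid algebra of `ℕ^s` modulo connectivity kills `(E_G)`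
but separates distinct classes; it also sends no monomial to zero. Writing
`x^M - x^N = x^g (x^(M-g) - x^(N-g))` with `g = gcd(M, N)`, primality of `(E_G)` then forces
`x^(M-g) - x^(N-g) ∈ (E_G)`, that is, `M - g` and `N - g` are connected. -/

section EventIdeal

variable {k : Type*} [CommRing k]

lemma mon_add (a b : Fin s → ℕ) : mon k (a + b) = mon k a * mon k b := by
  rw [mon, mon, mon, monomial_mul, one_mul]
  congr 2
  ext
  simp

lemma mgcd_add_sub_left (M N : Fin s → ℕ) : mgcd M N + (M - mgcd M N) = M :=
  add_tsub_cancel_of_le fun _ => min_le_left _ _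

lemma mgcd_add_sub_right (M N : Fin s → ℕ) : mgcd M N + (N - mgcd M N) = N :=
  add_tsub_cancel_of_le fun _ => min_le_right _ _

namespace CRN

variable (G : CRN s)

lemma eventEdge_add_right {M N : Fin s → ℕ} (h : G.eventEdge M N) (c : Fin s → ℕ) :
    G.eventEdge (M + c) (N + c) := by
  obtain ⟨i, j, d, he, rfl, rfl⟩ := h
  exact ⟨i, j, d + c, he, add_right_comm _ _ _, add_right_comm _ _ _⟩

lemma connected_add_right {M N : Fin s → ℕ} (h : G.connected M N) (c : Fin s → ℕ) :
    G.connected (M + c) (N + c) :=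
  h.lift (· + c) fun _ _ => Or.imp (G.eventEdge_add_right · c) (G.eventEdge_add_right · c)

lemma connected_symm {M N : Fin s → ℕ} (h : G.connected M N) : G.connected N M :=
  have : Std.Symm fun a b => G.eventEdge a b ∨ G.eventEdge b a := ⟨fun _ _ => Or.symm⟩
  Std.Symm.symm (r := ReflTransGen _) _ _ h

def connectedCon : AddCon (Fin s → ℕ) where
  r := G.connected
  iseqv := ⟨fun _ => .refl, G.connected_symm, .trans⟩
  add' {M M' N N'} hM hN := by
    have hN' := G.connected_add_right hN M'
    rw [add_comm N, add_comm N'] at hN'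
    exact (G.connected_add_right hM N).trans hN'

lemma eventEdge_of_edge {i j : Fin G.n} (h : G.edge i j) : G.eventEdge (G.ψ i) (G.ψ j) :=
  ⟨i, j, 0, h, (zero_add _).symm, (zero_add _).symm⟩

lemma mon_sub_mon_mem_eventIdeal_of_eventEdge {M N : Fin s → ℕ} (h : G.eventEdge M N) :
    mon k M - mon k N ∈ G.eventIdeal k := by
  obtain ⟨i, j, c, he, rfl, rfl⟩ := h
  rw [mon_add, mon_add, ← mul_sub]
  exact Ideal.mul_mem_left _ _ (Ideal.subset_span ⟨i, j, .inl he, rfl⟩)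

lemma mon_sub_mon_mem_eventIdeal_of_connected {M N : Fin s → ℕ} (h : G.connected M N) :
    mon k M - mon k N ∈ G.eventIdeal k := by
  induction h with
  | refl => simp
  | tail _ hstep ih =>
    rw [← sub_add_sub_cancel]
    refine Ideal.add_mem _ ih ?_
    rcases hstep with hstep | hstep
    · exact G.mon_sub_mon_mem_eventIdeal_of_eventEdge hstep
    · rw [← neg_sub]
      exact neg_mem (G.mon_sub_mon_mem_eventIdeal_of_eventEdge hstep)

noncomputable def toConnectedComponents :
    MvPolynomial (Fin s) k →+* AddMonoidAlgebra k G.connectedCon.Quotient :=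
  AddMonoidAlgebra.mapDomainRingHom k (G.connectedCon.mk'.comp Finsupp.coeFnAddHom)

lemma toConnectedComponents_mon (M : Fin s → ℕ) :
    G.toConnectedComponents (mon k M) =
      AddMonoidAlgebra.single (M : G.connectedCon.Quotient) 1 := by
  rw [mon, ← single_eq_monomial]
  exact AddMonoidAlgebra.mapDomain_single

lemma eventIdeal_le_ker_toConnectedComponents :
    G.eventIdeal k ≤ RingHom.ker (G.toConnectedComponents (k := k)) := by
  rw [eventIdeal, Ideal.span_le]
  rintro _ ⟨i, j, he, rfl⟩
  have hij : (G.ψ i : G.connectedCon.Quotient) = G.ψ j := by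
    refine (AddCon.eq _).2 (.single ?_)
    rcases he with he | he
    · exact .inl (G.eventEdge_of_edge he)
    · exact .inr (G.eventEdge_of_edge he)
  simp [RingHom.mem_ker, toConnectedComponents_mon, hij]

variable [Nontrivial k]

lemma connected_of_mon_sub_mon_mem_eventIdeal {M N : Fin s → ℕ}
    (h : mon k M - mon k N ∈ G.eventIdeal k) : G.connected M N := by
  have h0 := G.eventIdeal_le_ker_toConnectedComponents h
  rw [RingHom.mem_ker, map_sub, sub_eq_zero, toConnectedComponents_mon,
    toConnectedComponents_mon, AddMonoidAlgebra.single_left_inj one_ne_zero] at h0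
  exact (AddCon.eq _).1 h0

lemma mon_sub_mon_mem_eventIdeal_iff {M N : Fin s → ℕ} :
    mon k M - mon k N ∈ G.eventIdeal k ↔ G.connected M N :=
  ⟨G.connected_of_mon_sub_mon_mem_eventIdeal, G.mon_sub_mon_mem_eventIdeal_of_connected⟩

lemma mon_notMem_eventIdeal (M : Fin s → ℕ) : mon k M ∉ G.eventIdeal k := fun h => by
  simpa [RingHom.mem_ker, toConnectedComponents_mon] using
    G.eventIdeal_le_ker_toConnectedComponents h

end CRN

end EventIdeal

theorem prime_eventIdeal_not_catalytic_general {k : Type*} [Field k] {s : ℕ}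
    (G : CRN s) (hP : (G.eventIdeal k).IsPrime) :
    ¬ G.catalytic := by
  rintro ⟨M, N, hc, hnc⟩
  have hfactor : mon k (mgcd M N) * (mon k (M - mgcd M N) - mon k (N - mgcd M N)) ∈
      G.eventIdeal k := by
    rwa [mul_sub, ← mon_add, ← mon_add, mgcd_add_sub_left, mgcd_add_sub_right,
      G.mon_sub_mon_mem_eventIdeal_iff]
  rcases hP.mem_or_mem hfactor with h | h
  · exact G.mon_notMem_eventIdeal _ h
  · exact hnc (G.mon_sub_mon_mem_eventIdeal_iff.1 h)

/-- If `(E_G)` is prime then `G` is not catalytic. -/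
theorem prime_eventIdeal_not_catalytic {k : Type*} [Field k] [CharZero k] {s : ℕ}
    (G : CRN s) (hwr : G.weaklyReversible) (hP : (G.eventIdeal k).IsPrime) :
    ¬ G.catalytic :=
  prime_eventIdeal_not_catalytic_general G hP
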